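/- arXiv:2009.14559 — 3 statements merged into one kernel-verified Lean document; each statement's English description precedes it below -/
import Mathlib

section
/- For constant market coefficients, the log-utility expected terminal wealth functional π ↦ E[log X^π_T] = log x₀ + T(r + πᵀ(μ - r𝟙_d) - ½‖σᵀπ‖²) over constant strategies π ∈ ℝ^d subject to ⟨π, 𝟙_d⟩ = h is uniquely maximized at π* = Aμ + hc, where A = Dᵀ(DΣDᵀ)⁻¹D, c = (I_d - AΣ)e_d, Σ = σσᵀ. -/
/-!
On the hyperplane `⟨π, 𝟙⟩ = h`, completing the square gives
`g π = g π* - ½ (π - π*)ᵀ Σ (π - π*)` as soon as `π*` lies on the hyperplane and satisfies the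
Lagrange condition `μ - r𝟙 - Σπ* ∈ ℝ𝟙`; positive definiteness of `Σ` then makes `π*` the unique
maximizer. Both conditions come from `DΣA = D`: since `ker D = ℝ𝟙`, the range of `A = Dᵀ(DΣDᵀ)⁻¹D`
is orthogonal to `𝟙`, and `D(μ - Σπ*) = Dμ - DΣAμ - h DΣ(1 - AΣ)e_d = 0`.
-/

open Matrix

section Quadratic

variable {n : Type*} [Fintype n] (S : Matrix n n ℝ) (b : n → ℝ)

noncomputable def concaveQuadratic (x : n → ℝ) : ℝ := x ⬝ᵥ b - 1 / 2 * (x ⬝ᵥ S *ᵥ x)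

lemma concaveQuadratic_eq_sub (hS : S.IsSymm) (x y : n → ℝ) :
    concaveQuadratic S b x = concaveQuadratic S b y + (x - y) ⬝ᵥ (b - S *ᵥ y)
      - 1 / 2 * ((x - y) ⬝ᵥ S *ᵥ (x - y)) := by
  have hyx : y ⬝ᵥ S *ᵥ x = x ⬝ᵥ S *ᵥ y := by
    rw [dotProduct_mulVec, ← mulVec_transpose, hS.eq, dotProduct_comm]
  simp only [concaveQuadratic, mulVec_sub, sub_dotProduct, dotProduct_sub, hyx]
  ring

lemma concaveQuadratic_lt_of_sub_mulVec_eq_smul (hS : S.PosDef) {u x y : n → ℝ} {t : ℝ}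
    (hgrad : b - S *ᵥ y = t • u) (hxy : x ⬝ᵥ u = y ⬝ᵥ u) (hne : x ≠ y) :
    concaveQuadratic S b x < concaveQuadratic S b y := by
  have horth : (x - y) ⬝ᵥ (b - S *ᵥ y) = 0 := by
    rw [hgrad, dotProduct_smul, sub_dotProduct, hxy, sub_self, smul_zero]
  have hpos : 0 < (x - y) ⬝ᵥ S *ᵥ (x - y) := by
    simpa using hS.dotProduct_mulVec_pos (sub_ne_zero.mpr hne)
  rw [concaveQuadratic_eq_sub S b (isHermitian_iff_isSymm.mp hS.isHermitian), horth]
  linarith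

end Quadratic

section Projection

variable {n ι : Type*} [Fintype n] [Fintype ι] (S : Matrix n n ℝ) (D : Matrix ι n ℝ)

lemma mul_mul_transpose_mul_inv_mul [DecidableEq ι] (hS : S.PosDef)
    (hD : Function.Injective D.vecMul) : D * S * (Dᵀ * (D * S * Dᵀ)⁻¹ * D) = D := by
  have hM : (D * S * Dᵀ).PosDef := by
    simpa [conjTranspose_eq_transpose_of_trivial] using hS.mul_mul_conjTranspose_same hD
  rw [← Matrix.mul_assoc, ← Matrix.mul_assoc,
    mul_nonsing_inv _ ((isUnit_iff_isUnit_det _).mp hM.isUnit), Matrix.one_mul]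

lemma transpose_mul_mul_mulVec_dotProduct_eq_zero (X : Matrix ι ι ℝ) {u : n → ℝ}
    (hu : D *ᵥ u = 0) (v : n → ℝ) : (Dᵀ * X * D) *ᵥ v ⬝ᵥ u = 0 := by
  rw [Matrix.mul_assoc, ← mulVec_mulVec, mulVec_transpose, ← dotProduct_mulVec, hu,
    dotProduct_zero]

end Projection

section Optimum

variable {n : Type*} [Fintype n] [DecidableEq n] {S A : Matrix n n ℝ}

lemma mulVec_sub_mulVec_eq_zero {ι : Type*} {D : Matrix ι n ℝ} (hA : D * S * A = D)
    (μ e : n → ℝ) (h : ℝ) :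
    D *ᵥ (μ - S *ᵥ (A *ᵥ μ + h • (1 - A * S) *ᵥ e)) = 0 := by
  have hc : D * S * (1 - A * S) = 0 := by
    rw [Matrix.mul_sub, Matrix.mul_one, ← Matrix.mul_assoc, hA, sub_self]
  rw [mulVec_sub, mulVec_mulVec, mulVec_add, mulVec_smul, mulVec_mulVec, mulVec_mulVec, hA, hc,
    zero_mulVec, smul_zero, add_zero, sub_self]

lemma mulVec_add_smul_dotProduct {u e : n → ℝ} (hA : ∀ v, A *ᵥ v ⬝ᵥ u = 0) (μ : n → ℝ) (h : ℝ) :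
    (A *ᵥ μ + h • (1 - A * S) *ᵥ e) ⬝ᵥ u = h * (e ⬝ᵥ u) := by
  rw [add_dotProduct, hA, smul_dotProduct, sub_mulVec, one_mulVec, sub_dotProduct,
    ← mulVec_mulVec, hA, zero_add, sub_zero, smul_eq_mul]

end Optimum

noncomputable def lastDiffMatrix (n : ℕ) : Matrix (Fin n) (Fin (n + 1)) ℝ :=
  of fun i j => if j = i.castSucc then 1 else if j = Fin.last n then -1 else 0

namespace lastDiffMatrix

variable {n : ℕ}

lemma mulVec_apply (v : Fin (n + 1) → ℝ) (i : Fin n) :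
    (lastDiffMatrix n *ᵥ v) i = v i.castSucc - v (Fin.last n) := by
  simp [lastDiffMatrix, mulVec, dotProduct, Fin.sum_univ_castSucc, ite_mul, Fin.castSucc_ne_last,
    (Fin.castSucc_lt_last i).ne', sub_eq_add_neg]

lemma vecMul_castSucc (w : Fin n → ℝ) (i : Fin n) :
    (w ᵥ* lastDiffMatrix n) i.castSucc = w i := by
  simp [lastDiffMatrix, vecMul, dotProduct]

lemma mulVec_one : lastDiffMatrix n *ᵥ 1 = 0 := by
  ext i; simp [mulVec_apply]

lemma vecMul_injective : Function.Injective (lastDiffMatrix n).vecMul := fun w w' hw => by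
  ext i; simpa [vecMul_castSucc] using congrFun hw i.castSucc

lemma exists_eq_smul_one_of_mulVec_eq_zero {v : Fin (n + 1) → ℝ}
    (hv : lastDiffMatrix n *ᵥ v = 0) : ∃ t : ℝ, v = t • 1 := by
  refine ⟨v (Fin.last n), funext fun j => ?_⟩
  induction j using Fin.lastCases with
  | last => simp
  | cast i => simpa [mulVec_apply, sub_eq_zero] using congrFun hv i

end lastDiffMatrix

theorem stmt13_general (d m : ℕ) (hd : 2 ≤ d) (σ : Matrix (Fin d) (Fin m) ℝ)
    (S : Matrix (Fin d) (Fin d) ℝ) (hSdef : S = σ * σᵀ) (hS : S.PosDef)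
    (r T x₀ h : ℝ) (hT : 0 < T) (μ : Fin d → ℝ)
    (D : Matrix (Fin (d - 1)) (Fin d) ℝ)
    (hD : ∀ i j, D i j =
      if (j : ℕ) = (i : ℕ) then 1 else if (j : ℕ) = d - 1 then -1 else 0)
    (A : Matrix (Fin d) (Fin d) ℝ) (hA : A = Dᵀ * (D * S * Dᵀ)⁻¹ * D)
    (c : Fin d → ℝ)
    (hc : c = (1 - A * S) *ᵥ (fun j : Fin d => if (j : ℕ) = d - 1 then (1:ℝ) else 0))
    (F : (Fin d → ℝ) → ℝ)
    (hF : F = fun π => Real.log x₀ + T * (r + π ⬝ᵥ (μ - r • (1 : Fin d → ℝ)) -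
      (1 / 2) * ((σᵀ *ᵥ π) ⬝ᵥ (σᵀ *ᵥ π))))
    (πstar : Fin d → ℝ) (hπ : πstar = A *ᵥ μ + h • c) :
    πstar ⬝ᵥ (fun _ => 1) = h ∧
    (∀ π : Fin d → ℝ, π ⬝ᵥ (fun _ => 1) = h → F π ≤ F πstar) ∧
    (∀ π : Fin d → ℝ, π ⬝ᵥ (fun _ => 1) = h → F π = F πstar → π = πstar) := by
  obtain ⟨n, rfl⟩ : ∃ n, d = n + 1 := ⟨d - 1, by omega⟩
  obtain rfl : D = lastDiffMatrix n := by
    ext i j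
    simp [hD, lastDiffMatrix, Fin.ext_iff]
  obtain rfl : c = (1 - A * S) *ᵥ Pi.single (Fin.last n) 1 := by
    rw [hc]; congr; ext j; simp [Pi.single_apply, Fin.ext_iff]
  have hDSA : lastDiffMatrix n * S * A = lastDiffMatrix n := by
    rw [hA]; exact mul_mul_transpose_mul_inv_mul S _ hS lastDiffMatrix.vecMul_injective
  have hAu (v : Fin (n + 1) → ℝ) : A *ᵥ v ⬝ᵥ 1 = 0 := by
    rw [hA]; exact transpose_mul_mul_mulVec_dotProduct_eq_zero _ _ lastDiffMatrix.mulVec_one v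
  have hconstr : πstar ⬝ᵥ 1 = h := by
    rw [hπ, mulVec_add_smul_dotProduct hAu]
    simp
  obtain ⟨t, ht⟩ := lastDiffMatrix.exists_eq_smul_one_of_mulVec_eq_zero
    (hπ ▸ mulVec_sub_mulVec_eq_zero hDSA μ _ h)
  have hgrad : μ - r • 1 - S *ᵥ πstar = (t - r) • 1 := by rw [sub_right_comm, ht, sub_smul]
  have hFq (π : Fin (n + 1) → ℝ) :
      F π = Real.log x₀ + T * (r + concaveQuadratic S (μ - r • 1) π) := by
    rw [hF, concaveQuadratic, hSdef, ← mulVec_mulVec, dotProduct_mulVec, ← mulVec_transpose]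
    ring
  have hlt (π : Fin (n + 1) → ℝ) (hπu : π ⬝ᵥ 1 = h) (hne : π ≠ πstar) : F π < F πstar := by
    have := concaveQuadratic_lt_of_sub_mulVec_eq_smul S _ hS hgrad (hπu.trans hconstr.symm) hne
    rw [hFq, hFq]
    gcongr
  refine ⟨hconstr, fun π hπu => ?_, fun π hπu hFπ => ?_⟩
  · rcases eq_or_ne π πstar with rfl | hne
    exacts [le_rfl, (hlt π hπu hne).le]
  · by_contra hne
    exact (hlt π hπu hne).ne hFπ

/-- For constant coefficients, the log-utility functional over constant strategies
with `⟨π,𝟙⟩ = h` is uniquely maximized at `π* = Aμ + hc`. -/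
theorem stmt13 (d m : ℕ) (hd : 2 ≤ d) (σ : Matrix (Fin d) (Fin m) ℝ)
    (S : Matrix (Fin d) (Fin d) ℝ) (hSdef : S = σ * σᵀ) (hS : S.PosDef)
    (r T x₀ h : ℝ) (hT : 0 < T) (hx : 0 < x₀) (hh : 0 < h) (μ : Fin d → ℝ)
    (D : Matrix (Fin (d - 1)) (Fin d) ℝ)
    (hD : ∀ i j, D i j =
      if (j : ℕ) = (i : ℕ) then 1 else if (j : ℕ) = d - 1 then -1 else 0)
    (A : Matrix (Fin d) (Fin d) ℝ) (hA : A = Dᵀ * (D * S * Dᵀ)⁻¹ * D)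
    (c : Fin d → ℝ)
    (hc : c = (1 - A * S) *ᵥ (fun j : Fin d => if (j : ℕ) = d - 1 then (1:ℝ) else 0))
    (F : (Fin d → ℝ) → ℝ)
    (hF : F = fun π => Real.log x₀ + T * (r + π ⬝ᵥ (μ - r • (1 : Fin d → ℝ)) -
      (1 / 2) * ((σᵀ *ᵥ π) ⬝ᵥ (σᵀ *ᵥ π))))
    (πstar : Fin d → ℝ) (hπ : πstar = A *ᵥ μ + h • c) :
    πstar ⬝ᵥ (fun _ => 1) = h ∧
    (∀ π : Fin d → ℝ, π ⬝ᵥ (fun _ => 1) = h → F π ≤ F πstar) ∧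
    (∀ π : Fin d → ℝ, π ⬝ᵥ (fun _ => 1) = h → F π = F πstar → π = πstar) :=
  stmt13_general d m hd σ S hSdef hS r T x₀ h hT μ D hD A hA c hc F hF πstar hπ
end

section
/- For γ < 1, the maximizer of g(π) = πᵀ(μ - r𝟙_d) - ((1-γ)/2)πᵀΣπ over the hyperplane {π ∈ ℝ^d : 𝟙_dᵀπ = h} equals π* = (1/(1-γ))Aμ + hc, with A = Dᵀ(DΣDᵀ)⁻¹D and c = (I_d - AΣ)e_d. -/
/-!
Write `v = π - π*` for a point `π` of the hyperplane, so `𝟙ᵀv = 0`. Expanding the quadratic,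
`g(π) = g(π*) + vᵀ(μ - r𝟙 - (1-γ)Σπ*) - ((1-γ)/2) vᵀΣv`. Since `DΣA = D` and `D𝟙 = 0`, `D` kills
the gradient `μ - r𝟙 - (1-γ)Σπ*`; the kernel of `D` is spanned by `𝟙`, so the linear term vanishes
and positive definiteness of `Σ` makes `π*` the unique maximizer. Feasibility of `π*` comes from
`𝟙ᵀA = 0` and `𝟙ᵀe_d = 1`.
-/

open Matrix

section ConcaveQuadratic

variable {n : Type*} [Fintype n]

noncomputable def concaveQuad (S : Matrix n n ℝ) (b : n → ℝ) (κ : ℝ) (π : n → ℝ) : ℝ :=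
  π ⬝ᵥ b - κ / 2 * (π ⬝ᵥ (S *ᵥ π))

lemma concaveQuad_add {S : Matrix n n ℝ} (hS : S.IsSymm) (b : n → ℝ) (κ : ℝ) (x v : n → ℝ) :
    concaveQuad S b κ (x + v) =
      concaveQuad S b κ x + v ⬝ᵥ (b - κ • S *ᵥ x) - κ / 2 * (v ⬝ᵥ (S *ᵥ v)) := by
  have hcross : x ⬝ᵥ (S *ᵥ v) = v ⬝ᵥ (S *ᵥ x) := by
    rw [dotProduct_mulVec, ← mulVec_transpose, hS.eq, dotProduct_comm]
  simp only [concaveQuad, mulVec_add, dotProduct_add, add_dotProduct, dotProduct_sub,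
    dotProduct_smul, smul_eq_mul]
  linear_combination (-κ / 2) * hcross

lemma concaveQuad_eq_sub_of_gradient_const {S : Matrix n n ℝ} (hS : S.IsSymm) {b : n → ℝ}
    {κ t : ℝ} {x : n → ℝ} (hgrad : b - κ • S *ᵥ x = fun _ => t) {π : n → ℝ}
    (hπ : π ⬝ᵥ (fun _ => 1) = x ⬝ᵥ (fun _ => 1)) :
    concaveQuad S b κ π = concaveQuad S b κ x - κ / 2 * ((π - x) ⬝ᵥ (S *ᵥ (π - x))) := by
  have hv : (π - x) ⬝ᵥ (fun _ => t) = 0 := by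
    rw [show (fun _ => t : n → ℝ) = t • fun _ => 1 by ext; simp, dotProduct_smul,
      sub_dotProduct, hπ, sub_self, smul_zero]
  rw [← add_sub_cancel x π, concaveQuad_add hS, hgrad, hv, add_zero, add_sub_cancel_left]

variable {S : Matrix n n ℝ} (hS : S.PosDef) {b : n → ℝ} {κ t : ℝ} (hκ : 0 < κ) {x : n → ℝ}
  (hgrad : b - κ • S *ᵥ x = fun _ => t) {π : n → ℝ}
  (hπ : π ⬝ᵥ (fun _ => 1) = x ⬝ᵥ (fun _ => 1))
include hS hκ hgrad hπ

lemma concaveQuad_le_of_gradient_const : concaveQuad S b κ π ≤ concaveQuad S b κ x := by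
  have hq := hS.posSemidef.dotProduct_mulVec_nonneg (π - x)
  rw [star_trivial] at hq
  rw [concaveQuad_eq_sub_of_gradient_const (isHermitian_iff_isSymm.mp hS.isHermitian) hgrad hπ]
  nlinarith

lemma eq_of_concaveQuad_eq_of_gradient_const
    (heq : concaveQuad S b κ π = concaveQuad S b κ x) : π = x := by
  rw [concaveQuad_eq_sub_of_gradient_const (isHermitian_iff_isSymm.mp hS.isHermitian) hgrad hπ]
    at heq
  by_contra hne
  have hq := hS.dotProduct_mulVec_pos (sub_ne_zero.mpr hne)
  rw [star_trivial] at hq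
  nlinarith

end ConcaveQuadratic

section Projection

variable {m n : Type*} [Fintype n]

lemma mul_mul_transpose_nonsing_inv_mul {R : Type*} [CommRing R] [Fintype m] [DecidableEq m]
    (D : Matrix m n R) (S : Matrix n n R)
    (hW : IsUnit (D * S * Dᵀ).det) : D * S * (Dᵀ * (D * S * Dᵀ)⁻¹ * D) = D := by
  calc D * S * (Dᵀ * (D * S * Dᵀ)⁻¹ * D) = (D * S * Dᵀ) * (D * S * Dᵀ)⁻¹ * D := by
        simp only [Matrix.mul_assoc]
    _ = D := by rw [mul_nonsing_inv _ hW, Matrix.one_mul]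

lemma vecMul_transpose_mul_mul_eq_zero {R : Type*} [CommRing R] [Fintype m] {D : Matrix m n R}
    {u : n → R} (hu : D *ᵥ u = 0) (M : Matrix m m R) : u ᵥ* (Dᵀ * M * D) = 0 := by
  rw [← vecMul_vecMul, ← vecMul_vecMul, vecMul_transpose, hu, zero_vecMul, zero_vecMul]

variable [DecidableEq n]

lemma dotProduct_one_of_one_vecMul_eq_zero {R : Type*} [CommRing R] {A : Matrix n n R}
    (hA : (fun _ => 1) ᵥ* A = 0) (S : Matrix n n R) {e : n → R} (he : e ⬝ᵥ (fun _ => 1) = 1)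
    (a h : R) (μ : n → R) :
    (a • (A *ᵥ μ) + h • ((1 - A * S) *ᵥ e)) ⬝ᵥ (fun _ => 1) = h := by
  rw [dotProduct_comm, dotProduct_add, dotProduct_smul, dotProduct_smul, dotProduct_mulVec,
    dotProduct_mulVec, vecMul_sub, vecMul_one, ← vecMul_vecMul, hA, zero_vecMul, sub_zero,
    dotProduct_comm _ e, he]
  simp

lemma mulVec_gradient_eq_zero {K : Type*} [Field K] {D : Matrix m n K} {A S : Matrix n n K} (hDSA : D * S * A = D)
    (hD1 : D *ᵥ (fun _ => 1) = 0) {κ : K} (hκ : κ ≠ 0) (μ e : n → K) (r h : K) :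
    D *ᵥ (μ - r • (1 : n → K) - κ • S *ᵥ ((1 / κ) • (A *ᵥ μ) + h • ((1 - A * S) *ᵥ e))) =
      0 := by
  have hDS : D * S * (1 - A * S) = 0 := by
    rw [Matrix.mul_sub, Matrix.mul_one, ← Matrix.mul_assoc, hDSA, sub_self]
  simp only [mulVec_sub, mulVec_add, mulVec_smul, mulVec_mulVec, ← Matrix.mul_assoc, hDSA, hDS]
  rw [show D *ᵥ (1 : n → K) = 0 from hD1, zero_mulVec, smul_zero, smul_zero, add_zero, sub_zero,
    smul_smul, mul_one_div_cancel hκ, one_smul, sub_self]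

end Projection

section DiffMatrix

def diffMatrix (d : ℕ) : Matrix (Fin (d - 1)) (Fin d) ℝ :=
  of fun i j => if (j : ℕ) = i then 1 else if (j : ℕ) = d - 1 then -1 else 0

variable {d : ℕ}

lemma diffMatrix_row (hd : 0 < d) (i : Fin (d - 1)) :
    diffMatrix d i = Pi.single (Fin.castLE (Nat.sub_le d 1) i) 1 -
      Pi.single ⟨d - 1, Nat.sub_lt hd Nat.one_pos⟩ 1 := by
  ext j
  simp only [diffMatrix, of_apply, Pi.sub_apply, Pi.single_apply, Fin.ext_iff, Fin.val_castLE]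
  have := i.isLt
  split_ifs <;> first | omega | norm_num

lemma diffMatrix_col_castLE (i : Fin (d - 1)) :
    (fun k => diffMatrix d k (Fin.castLE (Nat.sub_le d 1) i)) = Pi.single i 1 := by
  ext k
  simp only [diffMatrix, of_apply, Pi.single_apply, Fin.ext_iff, Fin.val_castLE]
  have := i.isLt
  split_ifs <;> first | omega | norm_num

lemma diffMatrix_mulVec_apply (hd : 0 < d) (w : Fin d → ℝ) (i : Fin (d - 1)) :
    (diffMatrix d *ᵥ w) i =
      w (Fin.castLE (Nat.sub_le d 1) i) - w ⟨d - 1, Nat.sub_lt hd Nat.one_pos⟩ := by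
  rw [mulVec, diffMatrix_row hd, sub_dotProduct, single_dotProduct, single_dotProduct, one_mul,
    one_mul]

lemma diffMatrix_mulVec_one : diffMatrix d *ᵥ (fun _ => 1) = 0 := by
  ext i
  have hd : 0 < d := by have := i.isLt; omega
  rw [diffMatrix_mulVec_apply hd, sub_self, Pi.zero_apply]

lemma exists_eq_const_of_diffMatrix_mulVec_eq_zero (hd : 0 < d) {w : Fin d → ℝ}
    (hw : diffMatrix d *ᵥ w = 0) : ∃ t, w = fun _ => t := by
  refine ⟨w ⟨d - 1, Nat.sub_lt hd Nat.one_pos⟩, funext fun j => ?_⟩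
  by_cases hj : (j : ℕ) = d - 1
  · rw [show j = ⟨d - 1, _⟩ from Fin.ext hj]
  · have hrow := congrFun hw ⟨j, by omega⟩
    rwa [diffMatrix_mulVec_apply hd, Pi.zero_apply, sub_eq_zero] at hrow

lemma diffMatrix_vecMul_injective : Function.Injective (diffMatrix d).vecMul := by
  intro x y hxy
  ext i
  have hcol (z : Fin (d - 1) → ℝ) : (z ᵥ* diffMatrix d) (Fin.castLE (Nat.sub_le d 1) i) = z i := by
    rw [vecMul, diffMatrix_col_castLE, dotProduct_single, mul_one]
  rw [← hcol x, ← hcol y]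
  exact congrFun hxy _

lemma posDef_diffMatrix_mul_mul_transpose {S : Matrix (Fin d) (Fin d) ℝ} (hS : S.PosDef) :
    (diffMatrix d * S * (diffMatrix d)ᵀ).PosDef := by
  simpa only [conjTranspose_eq_transpose_of_trivial] using
    hS.mul_mul_conjTranspose_same diffMatrix_vecMul_injective

end DiffMatrix

theorem stmt14_general (d : ℕ) (hd : 2 ≤ d)
    (S : Matrix (Fin d) (Fin d) ℝ) (hS : S.PosDef)
    (μ : Fin d → ℝ) (r h γ : ℝ) (hγ : γ < 1)
    (D : Matrix (Fin (d - 1)) (Fin d) ℝ)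
    (hD : ∀ i j, D i j =
      if (j : ℕ) = (i : ℕ) then 1 else if (j : ℕ) = d - 1 then -1 else 0)
    (A : Matrix (Fin d) (Fin d) ℝ) (hA : A = Dᵀ * (D * S * Dᵀ)⁻¹ * D)
    (c : Fin d → ℝ)
    (hc : c = (1 - A * S) *ᵥ (fun j : Fin d => if (j : ℕ) = d - 1 then (1:ℝ) else 0))
    (g : (Fin d → ℝ) → ℝ)
    (hg : g = fun π => π ⬝ᵥ (μ - r • (1 : Fin d → ℝ)) -
      ((1 - γ) / 2) * (π ⬝ᵥ (S *ᵥ π)))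
    (πstar : Fin d → ℝ) (hπ : πstar = (1 / (1 - γ)) • (A *ᵥ μ) + h • c) :
    πstar ⬝ᵥ (fun _ => 1) = h ∧
    (∀ π : Fin d → ℝ, π ⬝ᵥ (fun _ => 1) = h → g π ≤ g πstar) ∧
    (∀ π : Fin d → ℝ, π ⬝ᵥ (fun _ => 1) = h → g π = g πstar → π = πstar) := by
  obtain rfl : D = diffMatrix d := Matrix.ext hD
  subst hg
  have hd : 0 < d := by omega
  have hκ : 0 < 1 - γ := sub_pos.mpr hγ
  have hW : IsUnit (diffMatrix d * S * (diffMatrix d)ᵀ).det :=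
    (posDef_diffMatrix_mul_mul_transpose hS).det_pos.ne'.isUnit
  have hDSA : diffMatrix d * S * A = diffMatrix d := hA ▸ mul_mul_transpose_nonsing_inv_mul _ S hW
  have hA1 : (fun _ => 1) ᵥ* A = 0 := hA ▸ vecMul_transpose_mul_mul_eq_zero diffMatrix_mulVec_one _
  have he : (fun j : Fin d => if (j : ℕ) = d - 1 then (1 : ℝ) else 0) ⬝ᵥ (fun _ => 1) = 1 := by
    rw [show (fun j : Fin d => if (j : ℕ) = d - 1 then (1 : ℝ) else 0) =
        Pi.single ⟨d - 1, Nat.sub_lt hd Nat.one_pos⟩ 1 by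
      ext j; simp [Pi.single_apply, Fin.ext_iff], single_dotProduct, one_mul]
  have hfeas : πstar ⬝ᵥ (fun _ => 1) = h := by
    rw [hπ, hc]
    exact dotProduct_one_of_one_vecMul_eq_zero hA1 S he _ h μ
  obtain ⟨t, hgrad⟩ := exists_eq_const_of_diffMatrix_mulVec_eq_zero hd
      (w := μ - r • 1 - (1 - γ) • S *ᵥ πstar) <| by
    rw [hπ, hc]
    exact mulVec_gradient_eq_zero hDSA diffMatrix_mulVec_one hκ.ne' μ _ r h
  exact ⟨hfeas,
    fun π hπ => concaveQuad_le_of_gradient_const hS hκ hgrad (hπ.trans hfeas.symm),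
    fun π hπ => eq_of_concaveQuad_eq_of_gradient_const hS hκ hgrad (hπ.trans hfeas.symm)⟩

/-- For `γ < 1`, the maximizer of `g(π) = πᵀ(μ - r𝟙) - ((1-γ)/2)πᵀΣπ` over the
hyperplane `{π : 𝟙ᵀπ = h}` equals `π* = (1/(1-γ))Aμ + hc`. -/
theorem stmt14 (d : ℕ) (hd : 2 ≤ d)
    (S : Matrix (Fin d) (Fin d) ℝ) (hS : S.PosDef)
    (μ : Fin d → ℝ) (r h γ : ℝ) (hh : 0 < h) (hγ : γ < 1)
    (D : Matrix (Fin (d - 1)) (Fin d) ℝ)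
    (hD : ∀ i j, D i j =
      if (j : ℕ) = (i : ℕ) then 1 else if (j : ℕ) = d - 1 then -1 else 0)
    (A : Matrix (Fin d) (Fin d) ℝ) (hA : A = Dᵀ * (D * S * Dᵀ)⁻¹ * D)
    (c : Fin d → ℝ)
    (hc : c = (1 - A * S) *ᵥ (fun j : Fin d => if (j : ℕ) = d - 1 then (1:ℝ) else 0))
    (g : (Fin d → ℝ) → ℝ)
    (hg : g = fun π => π ⬝ᵥ (μ - r • (1 : Fin d → ℝ)) -
      ((1 - γ) / 2) * (π ⬝ᵥ (S *ᵥ π)))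
    (πstar : Fin d → ℝ) (hπ : πstar = (1 / (1 - γ)) • (A *ᵥ μ) + h • c) :
    πstar ⬝ᵥ (fun _ => 1) = h ∧
    (∀ π : Fin d → ℝ, π ⬝ᵥ (fun _ => 1) = h → g π ≤ g πstar) ∧
    (∀ π : Fin d → ℝ, π ⬝ᵥ (fun _ => 1) = h → g π = g πstar → π = πstar) :=
  stmt14_general d hd S hS μ r h γ hγ D hD A hA c hc g hg πstar hπ
end

section
/- For each κ > 0, the equation ‖τ⁻¹(μ*(ψ) - ν)‖ = κ, where μ*(ψ) = ν - τ Σᵢ (λᵢ/(1-γ) + h/(ψ‖τ⁻¹𝟙_d‖))⁻¹ ⟨hτᵀc + (λᵢ/(1-γ))τ⁻¹ν, vᵢ⟩ vᵢ, has at most one solution ψ ∈ (0, κ]; equivalently, the map ψ ↦ ‖τ⁻¹(μ*(ψ) - ν)‖ = ‖Σᵢ (λᵢ/(1-γ) + h/(ψ‖τ⁻¹𝟙_d‖))⁻¹ bᵢ vᵢ‖ with bᵢ = ⟨hτᵀc + (λᵢ/(1-γ))τ⁻¹ν, vᵢ⟩ is nondecreasing in ψ on (0, ∞), and strictly increasing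 unless all bᵢ = 0. -/
/-!
Each coefficient `(λᵢ/(1-γ) + h/(ψN))⁻¹` is positive and strictly increasing in `ψ > 0`, because
`h/(ψN)` strictly decreases while `λᵢ/(1-γ) ≥ 0` is fixed. Hence every term of the sum of squares
is nondecreasing, and strictly increasing as soon as `bᵢ ≠ 0`; a strictly increasing function takes
the value `κ` at most once, while for `b = 0` it is identically `0 ≠ κ`.
-/

open Matrix Set

theorem strictMonoOn_inv_add_div_mul {a h N : ℝ} (ha : 0 ≤ a) (hh : 0 < h) (hN : 0 < N) :
    StrictMonoOn (fun ψ => (a + h / (ψ * N))⁻¹) (Ioi 0) := by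
  intro ψ₁ hψ₁ ψ₂ hψ₂ hlt
  have hdiv : h / (ψ₂ * N) < h / (ψ₁ * N) :=
    div_lt_div_of_pos_left hh (mul_pos hψ₁ hN) (mul_lt_mul_of_pos_right hlt hN)
  exact inv_strictAnti₀ (add_pos_of_nonneg_of_pos ha (div_pos hh (mul_pos hψ₂ hN)))
    (by linarith)

section SqrtSumSq

variable {α ι : Type*} [Preorder α] [Fintype ι] {s : Set α} {f : ι → α → ℝ} (b : ι → ℝ)

theorem monotoneOn_sqrt_sum_sq_mul (hf : ∀ i, MonotoneOn (f i) s)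
    (hf₀ : ∀ i, ∀ x ∈ s, 0 ≤ f i x) :
    MonotoneOn (fun x => √(∑ i, (f i x * b i) ^ 2)) s := by
  intro x hx y hy hxy
  refine Real.sqrt_le_sqrt (Finset.sum_le_sum fun i _ => ?_)
  have hfx := hf₀ i x hx
  rw [mul_pow, mul_pow]
  gcongr
  exact hf i hx hy hxy

theorem strictMonoOn_sqrt_sum_sq_mul (hf : ∀ i, StrictMonoOn (f i) s)
    (hf₀ : ∀ i, ∀ x ∈ s, 0 ≤ f i x) (hb : ∃ i, b i ≠ 0) :
    StrictMonoOn (fun x => √(∑ i, (f i x * b i) ^ 2)) s := by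
  obtain ⟨j, hj⟩ := hb
  intro x hx y hy hxy
  refine Real.sqrt_lt_sqrt (by positivity) (Finset.sum_lt_sum (fun i _ => ?_) ⟨j, by simp, ?_⟩)
  · have hfx := hf₀ i x hx
    rw [mul_pow, mul_pow]
    gcongr
    exact (hf i hx hy hxy).le
  · rw [mul_pow, mul_pow]
    exact mul_lt_mul_of_pos_right (pow_lt_pow_left₀ (hf j hx hy hxy) (hf₀ j x hx) two_ne_zero)
      (by positivity)

end SqrtSumSq

theorem stmt16_general (d : ℕ) (h γ κ : ℝ) (hh : 0 < h) (hγ : γ < 1)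
    (lam : Fin d → ℝ) (hlam : ∀ i, 0 ≤ lam i)
    (b : Fin d → ℝ)
    (N : ℝ) (hNpos : 0 < N)
    (g : ℝ → ℝ)
    (hg : g = fun ψ =>
      Real.sqrt (∑ i, ((lam i / (1 - γ) + h / (ψ * N))⁻¹ * b i) ^ 2)) :
    (∀ ψ₁ ψ₂ : ℝ, 0 < ψ₁ → ψ₁ ≤ ψ₂ → g ψ₁ ≤ g ψ₂) ∧
    ((∃ i, b i ≠ 0) → ∀ ψ₁ ψ₂ : ℝ, 0 < ψ₁ → ψ₁ < ψ₂ → g ψ₁ < g ψ₂) ∧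
    (∀ ψ₁ ψ₂ : ℝ, ψ₁ ∈ Set.Ioc 0 κ → ψ₂ ∈ Set.Ioc 0 κ →
      g ψ₁ = κ → g ψ₂ = κ → ψ₁ = ψ₂) := by
  have ha : ∀ i, 0 ≤ lam i / (1 - γ) := fun i => div_nonneg (hlam i) (sub_pos.2 hγ).le
  have hcoef : ∀ i, StrictMonoOn (fun ψ => (lam i / (1 - γ) + h / (ψ * N))⁻¹) (Ioi 0) :=
    fun i => strictMonoOn_inv_add_div_mul (ha i) hh hNpos
  have hcoef₀ : ∀ i, ∀ ψ ∈ Ioi (0 : ℝ), 0 ≤ (lam i / (1 - γ) + h / (ψ * N))⁻¹ :=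
    fun i ψ hψ => inv_nonneg.2 (add_nonneg (ha i) (div_pos hh (mul_pos hψ hNpos)).le)
  have hmono : MonotoneOn g (Ioi 0) :=
    hg ▸ monotoneOn_sqrt_sum_sq_mul b (fun i => (hcoef i).monotoneOn) hcoef₀
  have hstrict : (∃ i, b i ≠ 0) → StrictMonoOn g (Ioi 0) :=
    fun hb => hg ▸ strictMonoOn_sqrt_sum_sq_mul b hcoef hcoef₀ hb
  refine ⟨fun ψ₁ ψ₂ h₁ h₁₂ => hmono h₁ (h₁.trans_le h₁₂) h₁₂,
    fun hb ψ₁ ψ₂ h₁ h₁₂ => hstrict hb h₁ (h₁.trans h₁₂) h₁₂, ?_⟩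
  intro ψ₁ ψ₂ hψ₁ hψ₂ hg₁ hg₂
  by_cases hb : ∃ i, b i ≠ 0
  · exact (hstrict hb).injOn hψ₁.1 hψ₂.1 (hg₁.trans hg₂.symm)
  · push Not at hb
    have hg_zero : g ψ₁ = 0 := by simp [hg, hb]
    linarith [hψ₁.1, hψ₁.2]

/-- The map `ψ ↦ ‖τ⁻¹(μ*(ψ)-ν)‖ = √(Σᵢ (λᵢ/(1-γ) + h/(ψ‖τ⁻¹𝟙‖))⁻² bᵢ²)` is
nondecreasing on `(0,∞)`, strictly increasing unless all `bᵢ = 0`, so the equation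
`g(ψ) = κ` has at most one solution `ψ ∈ (0,κ]`. -/
theorem stmt16 (d : ℕ) (τ : Matrix (Fin d) (Fin d) ℝ) (hτ : IsUnit τ.det)
    (ν c : Fin d → ℝ) (h γ κ : ℝ) (hh : 0 < h) (hγ : γ < 1) (hκ : 0 < κ)
    (lam : Fin d → ℝ) (hlam : ∀ i, 0 ≤ lam i)
    (v : Fin d → Fin d → ℝ)
    (horth : ∀ i j, v i ⬝ᵥ v j = if i = j then 1 else 0)
    (b : Fin d → ℝ)
    (hb : b = fun i => (h • (τᵀ *ᵥ c) + (lam i / (1 - γ)) • (τ⁻¹ *ᵥ ν)) ⬝ᵥ v i)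
    (N : ℝ) (hNpos : 0 < N)
    (hN : N = Real.sqrt ((τ⁻¹ *ᵥ (fun _ => 1 : Fin d → ℝ)) ⬝ᵥ
      (τ⁻¹ *ᵥ (fun _ => 1 : Fin d → ℝ))))
    (g : ℝ → ℝ)
    (hg : g = fun ψ =>
      Real.sqrt (∑ i, ((lam i / (1 - γ) + h / (ψ * N))⁻¹ * b i) ^ 2)) :
    (∀ ψ₁ ψ₂ : ℝ, 0 < ψ₁ → ψ₁ ≤ ψ₂ → g ψ₁ ≤ g ψ₂) ∧
    ((∃ i, b i ≠ 0) → ∀ ψ₁ ψ₂ : ℝ, 0 < ψ₁ → ψ₁ < ψ₂ → g ψ₁ < g ψ₂) ∧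
    (∀ ψ₁ ψ₂ : ℝ, ψ₁ ∈ Set.Ioc 0 κ → ψ₂ ∈ Set.Ioc 0 κ →
      g ψ₁ = κ → g ψ₂ = κ → ψ₁ = ψ₂) :=
  stmt16_general d h γ κ hh hγ lam hlam b N hNpos g hg
end
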